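/- Let f : ℝ → ℝ be a C^1 circle lift, and suppose there exists an irrational real number α (α is not of the form p/q with p, q integers) such that (f^[n] 0)/n tends to α as n → ∞. Then sup_{x ∈ [0,1]} |(1/n) · log(deriv (f^[n]) x)| tends to 0 as n → ∞. -/

import Mathlib

/-!
Put `φ = log f'`. By the chain rule `log (f^[n])' x = ∑_{k<n} φ (f^[k] x)` is a Birkhoff sum of
`φ`, and since `f^[n] 1 - f^[n] 0 = 1` the mean value theorem gives a zero of it. So it is enough
that the oscillation of these Birkhoff sums is `o(n)`, i.e. a uniform form of unique ergodicity.

By Poincaré's theorem `f` is semiconjugate, through a monotone degree-one map `F`, to the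
rotation by `α`. Splitting `[0, 1]` into intervals on which `φ` oscillates little and placing
continuous bumps over their `F`-images squeezes `φ` between `Φ₁ ∘ F` and `Φ₂ ∘ F`, with `Φᵢ`
continuous, periodic and `∫ Φ₂ - ∫ Φ₁` small. The Birkhoff sums of `Φᵢ` along the rotation are
uniformly `n ∫ Φᵢ + o(n)` (Weyl): an orbit segment of `θ'` is shadowed by that of `θ + mα + j`
with `|m|` bounded, and averaging over `θ` brings in the integral.
-/

open Filter Topology Function Set

section BirkhoffSum

variable {X : Type*} {f : X → X} {g : X → ℝ} {C : ℝ}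

theorem abs_birkhoffSum_le (hg : ∀ x, |g x| ≤ C) (n : ℕ) (x : X) :
    |birkhoffSum f g n x| ≤ n * C := by
  simpa [birkhoffSum] using (Finset.abs_sum_le_sum_abs (fun k => g (f^[k] x)) _).trans
    (Finset.sum_le_sum fun k (_ : k ∈ Finset.range n) => hg (f^[k] x))

theorem abs_birkhoffSum_iterate_sub_le (hg : ∀ x, |g x| ≤ C) (m n : ℕ) (x : X) :
    |birkhoffSum f g n (f^[m] x) - birkhoffSum f g n x| ≤ 2 * m * C := by
  -- split `birkhoffSum f g (m + n) x` after `m` and after `n` steps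
  have h₁ := birkhoffSum_add f g m n x
  have h₂ := birkhoffSum_add f g n m x
  rw [add_comm n m] at h₂
  have : birkhoffSum f g n (f^[m] x) - birkhoffSum f g n x =
      birkhoffSum f g m (f^[n] x) - birkhoffSum f g m x := by linarith
  rw [this]
  linarith [abs_sub (birkhoffSum f g m (f^[n] x)) (birkhoffSum f g m x),
    abs_birkhoffSum_le (f := f) hg m (f^[n] x), abs_birkhoffSum_le (f := f) hg m x]

end BirkhoffSum

theorem Function.Periodic.uniformContinuous_of_continuous {β : Type*} [UniformSpace β]
    {ψ : ℝ → β} {c : ℝ} (hp : Periodic ψ c) (hc : 0 < c) (hψ : Continuous ψ) :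
    UniformContinuous ψ := by
  have := Fact.mk hc
  have hcoe : LipschitzWith 1 ((↑) : ℝ → AddCircle c) :=
    LipschitzWith.of_dist_le_mul fun x y => by
      simpa [dist_eq_norm, ← QuotientAddGroup.mk_sub, ← Real.norm_eq_abs] using
        QuotientAddGroup.norm_mk_le_norm
  exact (CompactSpace.uniformContinuous_of_continuous
    (continuous_coinduced_dom.mpr hψ : Continuous hp.lift)).comp hcoe.uniformContinuous

theorem Irrational.exists_forall_abs_int_mul_add_int_sub_le {α : ℝ} (hα : Irrational α)
    {δ : ℝ} (hδ : 0 < δ) :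
    ∃ M : ℕ, ∀ t : ℝ, ∃ m j : ℤ, m.natAbs ≤ M ∧ |m * α + j - t| ≤ δ := by
  obtain ⟨i, k, hk, -, hki⟩ :=
    Real.exists_int_int_abs_mul_sub_le α (Nat.ceil_pos.2 (one_div_pos.2 hδ))
  -- Dirichlet gives `β = kα - i` with `0 < |β| ≤ δ`; the multiples `rβ` with `|r| ≤ 1 / |β| + 1`
  -- are then `δ`-dense in `[0, 1]`.
  set β := k * α - i with hβ_def
  have hβ : β ≠ 0 := sub_ne_zero.2 ((hα.intCast_mul hk.ne').ne_int i)
  have hβδ : |β| ≤ δ := hki.trans <| by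
    rw [div_le_iff₀ (by positivity)]
    nlinarith [Nat.le_ceil (1 / δ), mul_one_div_cancel hδ.ne']
  refine ⟨(⌈1 / |β|⌉₊ + 1) * k.natAbs, fun t => ?_⟩
  set r := round (Int.fract t / β)
  have hround := abs_sub_round (Int.fract t / β)
  have hr : |r * β - Int.fract t| ≤ |β| := by
    have : r * β - Int.fract t = -β * (Int.fract t / β - r) := by field_simp; ring
    rw [this, abs_mul, abs_neg]
    nlinarith [abs_nonneg β]
  have hr' : r.natAbs ≤ ⌈1 / |β|⌉₊ + 1 := by
    have hs : |Int.fract t / β| ≤ 1 / |β| := by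
      rw [abs_div, abs_of_nonneg (Int.fract_nonneg t)]
      gcongr
      exact (Int.fract_lt_one t).le
    have := abs_sub_abs_le_abs_sub (r : ℝ) (Int.fract t / β)
    rw [abs_sub_comm] at this
    have : (r.natAbs : ℝ) ≤ ⌈1 / |β|⌉₊ + 1 := by
      rw [Nat.cast_natAbs, Int.cast_abs]
      linarith [Nat.le_ceil (1 / |β|)]
    exact_mod_cast this
  refine ⟨r * k, ⌊t⌋ - r * i, ?_, ?_⟩
  · rw [Int.natAbs_mul]
    exact Nat.mul_le_mul_right _ hr'
  · have : (r * k : ℤ) * α + ((⌊t⌋ - r * i : ℤ) : ℝ) - t = r * β - Int.fract t := by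
      rw [hβ_def]; push_cast; linear_combination Int.floor_add_fract t
    rw [this]
    exact hr.trans hβδ

theorem abs_sub_intervalIntegral_le_of_forall_sub_le {g : ℝ → ℝ}
    (hg : IntervalIntegrable g MeasureTheory.volume 0 1) {K : ℝ} (hK : ∀ x y, g x - g y ≤ K)
    (x : ℝ) : |g x - ∫ y in (0:ℝ)..1, g y| ≤ K := by
  have hle : ∀ {h : ℝ → ℝ}, IntervalIntegrable h MeasureTheory.volume 0 1 → (∀ y, h y ≤ K) →
      ∫ y in (0:ℝ)..1, h y ≤ K := fun hh hK => by
    simpa using intervalIntegral.integral_mono_on zero_le_one hh intervalIntegrable_const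
      fun y _ => hK y
  have h₁ := hle (intervalIntegrable_const.sub hg) (hK x)
  have h₂ := hle (hg.sub intervalIntegrable_const) (hK · x)
  simp only [intervalIntegral.integral_sub intervalIntegrable_const hg,
    intervalIntegral.integral_sub hg intervalIntegrable_const, intervalIntegral.integral_const,
    sub_zero, one_smul] at h₁ h₂
  exact abs_le.2 ⟨by linarith, h₁⟩

section Rotation

variable {α : ℝ} {ψ : ℝ → ℝ}

theorem Function.Periodic.birkhoffSum_add_right {c : ℝ} (hp : Periodic ψ c) (n : ℕ) :
    Periodic (birkhoffSum (· + α) ψ n) c := fun θ => by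
  simp only [birkhoffSum, add_right_iterate_apply, add_right_comm θ c, hp _]

theorem abs_birkhoffSum_add_right_sub_le {C : ℝ} (hψ : ∀ x, |ψ x| ≤ C) (n : ℕ) (θ : ℝ)
    (m : ℤ) :
    |birkhoffSum (· + α) ψ n (θ + m * α) - birkhoffSum (· + α) ψ n θ| ≤ 2 * m.natAbs * C := by
  obtain ⟨k, rfl | rfl⟩ := Int.eq_nat_or_neg m
  · simpa using abs_birkhoffSum_iterate_sub_le (f := (· + α)) hψ k n θ
  · simpa [abs_sub_comm, ← sub_eq_add_neg] using
      abs_birkhoffSum_iterate_sub_le (f := (· + α)) hψ k n (θ - k * α)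

theorem intervalIntegral_birkhoffSum_add_right (hc : Continuous ψ) (hp : Periodic ψ 1) (n : ℕ) :
    ∫ θ in (0:ℝ)..1, birkhoffSum (· + α) ψ n θ = n * ∫ θ in (0:ℝ)..1, ψ θ := by
  simp only [birkhoffSum, add_right_iterate_apply]
  rw [intervalIntegral.integral_finsetSum (f := fun k θ => ψ (θ + k • α)) fun k _ =>
    (hc.comp (continuous_add_const _)).intervalIntegrable _ _]
  simp [intervalIntegral.integral_comp_add_right, hp.intervalIntegral_add_eq _ 0, add_comm]

theorem Irrational.exists_forall_birkhoffSum_add_right_sub_le (hα : Irrational α)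
    (hc : Continuous ψ) (hp : Periodic ψ 1) {ε : ℝ} (hε : 0 < ε) :
    ∃ K, ∀ n θ θ', birkhoffSum (· + α) ψ n θ' - birkhoffSum (· + α) ψ n θ ≤ ε * n + K := by
  obtain ⟨C, hC⟩ : ∃ C, ∀ x, |ψ x| ≤ C := by
    obtain ⟨C, hC⟩ := isBounded_iff_forall_norm_le.1 (hp.isBounded_of_continuous one_ne_zero hc)
    exact ⟨C, fun x => hC _ (mem_range_self x)⟩
  obtain ⟨δ, hδ, hψδ⟩ :=
    Metric.uniformContinuous_iff.1 (hp.uniformContinuous_of_continuous one_pos hc) ε hε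
  obtain ⟨M, hM⟩ := hα.exists_forall_abs_int_mul_add_int_sub_le (half_pos hδ)
  refine ⟨2 * M * C, fun n θ θ' => ?_⟩
  obtain ⟨m, j, hmM, hmj⟩ := hM (θ' - θ)
  set S := birkhoffSum (· + α) ψ n
  have hshift : |S (θ + m * α) - S θ| ≤ 2 * M * C :=
    (abs_birkhoffSum_add_right_sub_le hC n θ m).trans <| by
      have := (abs_nonneg _).trans (hC 0)
      gcongr
  have hperiod : S (θ + m * α + j) = S (θ + m * α) := by
    simpa using (hp.birkhoffSum_add_right n).int_mul j (θ + m * α)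
  have hclose : S θ' - S (θ + m * α + j) ≤ ε * n := by
    have hterm : ∀ k ∈ Finset.range n,
        dist (ψ ((· + α)^[k] θ')) (ψ ((· + α)^[k] (θ + m * α + j))) ≤ ε := fun k _ => by
      refine (hψδ ?_).le
      rw [add_right_iterate_apply, add_right_iterate_apply, Real.dist_eq, abs_sub_comm]
      rw [show θ + m * α + j + k • α - (θ' + k • α) = m * α + j - (θ' - θ) by ring]
      exact hmj.trans_lt (half_lt_self hδ)
    calc S θ' - S (θ + m * α + j) ≤ dist (S θ') (S (θ + m * α + j)) :=
          (le_abs_self _).trans (Real.dist_eq _ _).ge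
      _ ≤ (Finset.range n).card • ε :=
          (dist_birkhoffSum_birkhoffSum_le _ _ _ _ _).trans (Finset.sum_le_card_nsmul _ _ _ hterm)
      _ = ε * n := by simp [mul_comm]
  linarith [abs_le.1 hshift]

theorem Irrational.eventually_abs_birkhoffSum_add_right_sub_le (hα : Irrational α)
    (hc : Continuous ψ) (hp : Periodic ψ 1) {ε : ℝ} (hε : 0 < ε) :
    ∀ᶠ n : ℕ in atTop,
      ∀ θ, |birkhoffSum (· + α) ψ n θ - n * ∫ x in (0:ℝ)..1, ψ x| ≤ ε * n := by
  obtain ⟨K, hK⟩ := hα.exists_forall_birkhoffSum_add_right_sub_le hc hp (half_pos hε)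
  filter_upwards [eventually_ge_atTop ⌈2 * K / ε⌉₊] with n hn θ
  have hSc : Continuous (birkhoffSum (· + α) ψ n) :=
    continuous_finsetSum _ fun k _ => hc.comp ((continuous_add_const α).iterate k)
  have := abs_sub_intervalIntegral_le_of_forall_sub_le (hSc.intervalIntegrable 0 1)
    (fun x y => hK n y x) θ
  rw [intervalIntegral_birkhoffSum_add_right hc hp] at this
  have hn' : 2 * K / ε ≤ n := (Nat.le_ceil _).trans (by exact_mod_cast hn)
  rw [div_le_iff₀ hε] at hn'
  linarith

end Rotation

def periodicIcc (p q : ℝ) : Set ℝ := {t | ∃ m : ℤ, t - m ∈ Icc p q}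

noncomputable def periodicBump (p q η : ℝ) (t : ℝ) : ℝ :=
  max 0 (1 - Metric.infDist t (periodicIcc p q) / η)

section PeriodicBump

variable {p q η : ℝ}

@[fun_prop]
theorem continuous_periodicBump : Continuous (periodicBump p q η) :=
  continuous_const.max (continuous_const.sub ((Metric.continuous_infDist_pt _).div_const η))

theorem periodic_periodicBump : Periodic (periodicBump p q η) 1 := fun t => by
  have himage : (· + 1) '' periodicIcc p q = periodicIcc p q := by
    ext y
    simp only [image_add_right, mem_preimage, periodicIcc, mem_ofPred_eq]
    exact ⟨fun ⟨m, hm⟩ => ⟨m + 1, by push_cast; convert hm using 1; ring⟩,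
      fun ⟨m, hm⟩ => ⟨m - 1, by push_cast; convert hm using 1; ring⟩⟩
  simp only [periodicBump]
  rw [← Metric.infDist_image (isometry_add_right 1) (x := t), himage]

theorem periodicBump_nonneg (t : ℝ) : 0 ≤ periodicBump p q η t := le_max_left _ _

theorem periodicBump_le_one (hη : 0 ≤ η) (t : ℝ) : periodicBump p q η t ≤ 1 :=
  max_le zero_le_one (sub_le_self _ (div_nonneg Metric.infDist_nonneg hη))

theorem periodicBump_eq_one {t : ℝ} (ht : t ∈ periodicIcc p q) : periodicBump p q η t = 1 := by
  simp [periodicBump, Metric.infDist_zero_of_mem ht]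

theorem periodicBump_eq_zero (hpq : p ≤ q) (hη : 0 < η) {t : ℝ} (h₁ : q + η ≤ t)
    (h₂ : t ≤ p + 1 - η) : periodicBump p q η t = 0 := by
  have hdist : η ≤ Metric.infDist t (periodicIcc p q) := by
    have hne : (periodicIcc p q).Nonempty := ⟨p, 0, by simpa using hpq⟩
    refine (Metric.le_infDist hne).2 fun y ⟨m, hm₁, hm₂⟩ => ?_
    rw [Real.dist_eq]
    rcases le_or_gt m 0 with hm | hm
    · have : (m : ℝ) ≤ 0 := by exact_mod_cast hm
      exact le_abs.2 (Or.inl (by linarith))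
    · have : (1 : ℝ) ≤ m := by exact_mod_cast hm
      exact le_abs.2 (Or.inr (by linarith))
  exact max_eq_left (by rwa [sub_nonpos, one_le_div hη])

theorem intervalIntegral_periodicBump_le (hpq : p ≤ q) (hη : 0 < η) :
    ∫ t in (0:ℝ)..1, periodicBump p q η t ≤ q - p + 2 * η := by
  have hint : ∀ a b, IntervalIntegrable (periodicBump p q η) MeasureTheory.volume a b :=
    fun a b => continuous_periodicBump.intervalIntegrable a b
  have hle : ∀ a b, a ≤ b → ∫ t in a..b, periodicBump p q η t ≤ b - a := fun a b hab => by
    simpa using intervalIntegral.integral_mono_on hab (hint a b) intervalIntegrable_const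
      fun t _ => periodicBump_le_one hη.le t
  -- over the period `[p - η, p - η + 1]` the bump vanishes to the right of `q + η`
  have hshift := (periodic_periodicBump (p := p) (q := q) (η := η)).intervalIntegral_add_eq
    0 (p - η)
  rw [zero_add] at hshift
  rw [hshift]
  rcases le_or_gt (q + η) (p + 1 - η) with hfit | hfit
  · have hzero : ∫ t in (q + η)..(p - η + 1), periodicBump p q η t = 0 := by
      rw [intervalIntegral.integral_congr (g := fun _ => 0) fun t ht => ?_,
        intervalIntegral.integral_zero]
      rw [uIcc_of_le (by linarith)] at ht
      exact periodicBump_eq_zero hpq hη ht.1 (by linarith [ht.2])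
    rw [← intervalIntegral.integral_add_adjacent_intervals (hint _ (q + η)) (hint _ _), hzero]
    linarith [hle (p - η) (q + η) (by linarith)]
  · linarith [hle (p - η) (p - η + 1) (by linarith)]

end PeriodicBump

theorem exists_sub_int_mem_Icc_div {N : ℕ} (hN : 0 < N) (z : ℝ) :
    ∃ j < N, ∃ m : ℤ, z - m ∈ Icc ((j : ℝ) / N) ((j + 1) / N) := by
  have hN' : (0 : ℝ) < N := by exact_mod_cast hN
  have hpos : 0 ≤ Int.fract z * N := by have := Int.fract_nonneg z; positivity
  refine ⟨⌊Int.fract z * N⌋₊, ?_, ⌊z⌋, ?_, ?_⟩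
  · rw [Nat.floor_lt hpos]
    nlinarith [Int.fract_lt_one z]
  · rw [← Int.fract, div_le_iff₀ hN']
    exact Nat.floor_le hpos
  · rw [← Int.fract, le_div_iff₀ hN']
    exact (Nat.lt_floor_add_one _).le

namespace CircleDeg1Lift

variable (F : CircleDeg1Lift)

theorem map_mem_periodicIcc {a b x : ℝ} {m : ℤ} (hx : x - m ∈ Icc a b) :
    F x ∈ periodicIcc (F a) (F b) :=
  ⟨m, by rw [← F.map_sub_int]; exact ⟨F.monotone hx.1, F.monotone hx.2⟩⟩

theorem sum_range_map_div_sub {N : ℕ} (hN : 0 < N) :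
    ∑ j ∈ Finset.range N, (F ((j + 1) / N) - F (j / N)) = 1 := by
  have := Finset.sum_range_sub (fun j : ℕ => F (j / N)) N
  push_cast at this
  rw [this, div_self (by positivity), zero_div, ← zero_add 1, F.map_add_one]
  ring

theorem le_sum_periodicBump {φ : ℝ → ℝ} (hp : Periodic φ 1) {N : ℕ} (hN : 0 < N) {c : ℕ → ℝ}
    (hφc : ∀ j < N, ∀ z ∈ Icc ((j : ℝ) / N) ((j + 1) / N), φ z ≤ c j) {B : ℝ}
    (hB : ∀ j < N, B ≤ c j) (η : ℝ) (z : ℝ) :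
    φ z ≤ B + ∑ j ∈ Finset.range N,
      (c j - B) * periodicBump (F (j / N)) (F ((j + 1) / N)) η (F z) := by
  obtain ⟨j, hj, m, hm⟩ := exists_sub_int_mem_Icc_div hN z
  have hterm := Finset.single_le_sum
    (f := fun i => (c i - B) * periodicBump (F (i / N)) (F ((i + 1) / N)) η (F z))
    (fun i hi => mul_nonneg (sub_nonneg.2 (hB i (Finset.mem_range.1 hi)))
      (periodicBump_nonneg _))
    (Finset.mem_range.2 hj)
  rw [periodicBump_eq_one (F.map_mem_periodicIcc hm), mul_one] at hterm
  have hφz : φ (z - m) = φ z := by simpa using hp.sub_int_mul_eq (x := z) m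
  linarith [hφc j hj _ hm]

theorem intervalIntegral_sum_periodicBump_le {N : ℕ} (hN : 0 < N) {c : ℕ → ℝ} {B : ℝ}
    (hB : ∀ j < N, B ≤ c j) {η : ℝ} (hη : 0 < η) :
    ∫ t in (0:ℝ)..1, (B + ∑ j ∈ Finset.range N,
        (c j - B) * periodicBump (F (j / N)) (F ((j + 1) / N)) η t) ≤
      ∑ j ∈ Finset.range N, c j * (F ((j + 1) / N) - F (j / N)) +
        2 * η * ∑ j ∈ Finset.range N, (c j - B) := by
  rw [intervalIntegral.integral_add intervalIntegrable_const
      (Continuous.intervalIntegrable (by fun_prop) _ _),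
    intervalIntegral.integral_finsetSum fun j _ =>
      Continuous.intervalIntegrable (by fun_prop) _ _]
  simp only [intervalIntegral.integral_const_mul, intervalIntegral.integral_const, sub_zero,
    one_smul]
  calc B + ∑ j ∈ Finset.range N, (c j - B) *
        ∫ t in (0:ℝ)..1, periodicBump (F (j / N)) (F ((j + 1) / N)) η t
      ≤ B + ∑ j ∈ Finset.range N, (c j - B) * (F ((j + 1) / N) - F (j / N) + 2 * η) := by
        gcongr with j hj
        · exact sub_nonneg.2 (hB j (Finset.mem_range.1 hj))
        · exact intervalIntegral_periodicBump_le (F.monotone (by gcongr; linarith)) hη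
    _ = B + ∑ j ∈ Finset.range N, c j * (F ((j + 1) / N) - F (j / N)) -
          B * ∑ j ∈ Finset.range N, (F ((j + 1) / N) - F (j / N)) +
          2 * η * ∑ j ∈ Finset.range N, (c j - B) := by
        rw [Finset.mul_sum, Finset.mul_sum, add_sub_assoc, ← Finset.sum_sub_distrib, add_assoc,
          ← Finset.sum_add_distrib]
        exact congrArg (B + ·) (Finset.sum_congr rfl fun j _ => by ring)
    _ = _ := by rw [F.sum_range_map_div_sub hN]; ring

theorem exists_le_comp_intervalIntegral_le {φ : ℝ → ℝ} (hc : Continuous φ) (hp : Periodic φ 1)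
    {N : ℕ} (hN : 0 < N) {ε : ℝ}
    (hφ : ∀ j < N, ∀ z ∈ Icc ((j : ℝ) / N) ((j + 1) / N), |φ z - φ (j / N)| ≤ ε)
    {η : ℝ} (hη : 0 < η) :
    ∃ Φ : ℝ → ℝ, Continuous Φ ∧ Periodic Φ 1 ∧ (∀ z, φ z ≤ Φ (F z)) ∧
      ∫ t in (0:ℝ)..1, Φ t ≤
        ∑ j ∈ Finset.range N, φ (j / N) * (F ((j + 1) / N) - F (j / N)) + ε + η := by
  obtain ⟨B, hB⟩ : BddBelow (range φ) := (hp.compact_of_continuous one_ne_zero hc).bddBelow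
  have hε : 0 ≤ ε := (abs_nonneg _).trans (hφ 0 hN 0 ⟨by simp, by positivity⟩)
  set c : ℕ → ℝ := fun j => φ (j / N) + ε
  have hBc : ∀ j < N, B ≤ c j := fun j _ => by linarith [hB (mem_range_self ((j : ℝ) / N))]
  set A := ∑ j ∈ Finset.range N, (c j - B)
  have hA : 0 ≤ A :=
    Finset.sum_nonneg fun j hj => sub_nonneg.2 (hBc j (Finset.mem_range.1 hj))
  set ρ := η / (2 * A + 1)
  have hρ : 0 < ρ := by positivity
  refine ⟨fun t => B + ∑ j ∈ Finset.range N,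
      (c j - B) * periodicBump (F (j / N)) (F ((j + 1) / N)) ρ t, by fun_prop,
    fun t => by simp only [periodic_periodicBump _],
    F.le_sum_periodicBump hp hN (fun j hj z hz => ?_) hBc ρ,
    (F.intervalIntegral_sum_periodicBump_le hN hBc hρ).trans ?_⟩
  · linarith [abs_le.1 (hφ j hj z hz)]
  · have hρA : 2 * ρ * A ≤ η := by
      have h : ρ * (2 * A + 1) = η := div_mul_cancel₀ η (by positivity)
      linarith
    simp only [c, add_mul, Finset.sum_add_distrib, ← Finset.mul_sum,
      F.sum_range_map_div_sub hN]
    linarith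

theorem exists_sandwich {φ : ℝ → ℝ} (hc : Continuous φ) (hp : Periodic φ 1) {ε : ℝ}
    (hε : 0 < ε) :
    ∃ Φ₁ Φ₂ : ℝ → ℝ, Continuous Φ₁ ∧ Periodic Φ₁ 1 ∧ Continuous Φ₂ ∧ Periodic Φ₂ 1 ∧
      (∀ z, Φ₁ (F z) ≤ φ z ∧ φ z ≤ Φ₂ (F z)) ∧
      (∫ t in (0:ℝ)..1, Φ₂ t) - ∫ t in (0:ℝ)..1, Φ₁ t ≤ ε := by
  obtain ⟨δ, hδ, hφδ⟩ := Metric.uniformContinuous_iff.1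
    (hp.uniformContinuous_of_continuous one_pos hc) (ε / 4) (by positivity)
  obtain ⟨N, hN⟩ := exists_nat_gt (1 / δ)
  have hN' : (0 : ℝ) < N := (one_div_pos.2 hδ).trans hN
  have hN0 : 0 < N := by exact_mod_cast hN'
  have hosc : ∀ j < N, ∀ z ∈ Icc ((j : ℝ) / N) ((j + 1) / N), |φ z - φ (j / N)| ≤ ε / 4 := by
    intro j _ z hz
    have hzδ : dist z (j / N) < δ := by
      rw [Real.dist_eq, abs_of_nonneg (sub_nonneg.2 hz.1)]
      calc z - j / N ≤ 1 / N := by linarith [hz.2, add_div (j : ℝ) 1 N]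
        _ < δ := (one_div_lt hN' hδ).2 hN
    simpa [Real.dist_eq] using (hφδ hzδ).le
  obtain ⟨Φ₂, hc₂, hp₂, hle₂, hint₂⟩ :=
    F.exists_le_comp_intervalIntegral_le hc hp hN0 hosc (η := ε / 4) (by positivity)
  obtain ⟨Ψ, hcΨ, hpΨ, hleΨ, hintΨ⟩ := F.exists_le_comp_intervalIntegral_le (φ := -φ) hc.neg
    (fun x => by simp only [Pi.neg_apply, hp x]) hN0
    (fun j hj z hz => by simpa [abs_sub_comm, neg_add_eq_sub] using hosc j hj z hz)
    (η := ε / 4) (by positivity)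
  refine ⟨-Ψ, Φ₂, hcΨ.neg, fun x => by simp only [Pi.neg_apply, hpΨ x], hc₂, hp₂,
    fun z => ⟨neg_le.1 (hleΨ z), hle₂ z⟩, ?_⟩
  have hneg : ∫ t in (0:ℝ)..1, (-Ψ) t = -∫ t in (0:ℝ)..1, Ψ t := intervalIntegral.integral_neg
  simp only [Pi.neg_apply, neg_mul, Finset.sum_neg_distrib] at hintΨ
  linarith

end CircleDeg1Lift

theorem Irrational.eventually_birkhoffSum_sub_le_of_semiconj {α : ℝ} (hα : Irrational α)
    {f : ℝ → ℝ} {F : CircleDeg1Lift} (hF : Semiconj F f (· + α)) {φ : ℝ → ℝ}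
    (hc : Continuous φ) (hp : Periodic φ 1) {ε : ℝ} (hε : 0 < ε) :
    ∀ᶠ n : ℕ in atTop, ∀ x y, birkhoffSum f φ n x - birkhoffSum f φ n y ≤ ε * n := by
  obtain ⟨Φ₁, Φ₂, hc₁, hp₁, hc₂, hp₂, hΦ, hint⟩ := F.exists_sandwich hc hp (half_pos hε)
  have hε4 : 0 < ε / 4 := by positivity
  filter_upwards [hα.eventually_abs_birkhoffSum_add_right_sub_le hc₁ hp₁ hε4,
    hα.eventually_abs_birkhoffSum_add_right_sub_le hc₂ hp₂ hε4] with n h₁ h₂ x y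
  have hx : birkhoffSum f φ n x ≤ birkhoffSum (· + α) Φ₂ n (F x) :=
    Finset.sum_le_sum fun k _ => (hF.iterate_right k x) ▸ (hΦ (f^[k] x)).2
  have hy : birkhoffSum (· + α) Φ₁ n (F y) ≤ birkhoffSum f φ n y :=
    Finset.sum_le_sum fun k _ => (hF.iterate_right k y) ▸ (hΦ (f^[k] y)).1
  have := mul_le_mul_of_nonneg_left hint (Nat.cast_nonneg (α := ℝ) n)
  linarith [abs_le.1 (h₁ (F y)), abs_le.1 (h₂ (F x))]

theorem CircleDeg1Lift.exists_semiconj_add_of_tendsto (f : CircleDeg1Lift) (hf : Bijective f)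
    {α : ℝ} (hα : Tendsto (fun n : ℕ => f^[n] 0 / n) atTop (𝓝 α)) :
    ∃ F : CircleDeg1Lift, Semiconj F f (· + α) := by
  have hτ : f.translationNumber = α :=
    tendsto_nhds_unique (by simpa [coe_pow] using f.tendsto_translation_number₀) hα
  obtain ⟨F, hF⟩ := semiconj_of_bijective_of_translationNumber_eq hf
    (isUnit_iff_bijective.1 (translate (Multiplicative.ofAdd α)).isUnit)
    (by rw [hτ, translationNumber_translate])
  exact ⟨F, fun x => by rw [hF x, translate_apply, add_comm]⟩

theorem hasDerivAt_iterate_of_differentiable {𝕜 : Type*} [NontriviallyNormedField 𝕜]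
    {f : 𝕜 → 𝕜} (hf : Differentiable 𝕜 f) (n : ℕ) (x : 𝕜) :
    HasDerivAt f^[n] (∏ k ∈ Finset.range n, deriv f (f^[k] x)) x := by
  induction n with
  | zero => simpa using hasDerivAt_id x
  | succ n ih =>
    rw [iterate_succ', Finset.prod_range_succ, mul_comm]
    exact (hf _).hasDerivAt.comp x ih

theorem log_deriv_iterate_eq_birkhoffSum {f : ℝ → ℝ} (hf : Differentiable ℝ f)
    (hpos : ∀ x, 0 < deriv f x) (n : ℕ) (x : ℝ) :
    Real.log (deriv f^[n] x) = birkhoffSum f (fun y => Real.log (deriv f y)) n x := by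
  rw [(hasDerivAt_iterate_of_differentiable hf n x).deriv, Real.log_prod fun k _ => (hpos _).ne']
  rfl

theorem exists_deriv_iterate_eq_one {f : ℝ → ℝ} (hf : Differentiable ℝ f)
    (hlift : ∀ x, f (x + 1) = f x + 1) (n : ℕ) : ∃ ξ, deriv f^[n] ξ = 1 := by
  have hdiff : Differentiable ℝ f^[n] := fun x =>
    (hasDerivAt_iterate_of_differentiable hf n x).differentiableAt
  obtain ⟨ξ, -, hξ⟩ := exists_deriv_eq_slope (f^[n]) zero_lt_one hdiff.continuous.continuousOn
    hdiff.differentiableOn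
  refine ⟨ξ, ?_⟩
  have hcomm : Function.Commute f (· + 1) := hlift
  rw [hξ, ← zero_add 1, (hcomm.iterate_left n).eq 0]
  simp

theorem periodic_deriv_of_map_add_one {f : ℝ → ℝ} (hlift : ∀ x, f (x + 1) = f x + 1) :
    Periodic (deriv f) 1 := fun x => by
  have : deriv (fun y => f (y + 1)) x = deriv (fun y => f y + 1) x := by simp_rw [hlift]
  rwa [deriv_comp_add_const, deriv_add_const] at this

theorem tendsto_iSup_abs_of_eventually_le {ι : Type*} {u : ℕ → ι → ℝ}
    (h : ∀ ε > 0, ∀ᶠ n in atTop, ∀ i, |u n i| ≤ ε) :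
    Tendsto (fun n => ⨆ i, |u n i|) atTop (𝓝 0) := by
  refine tendsto_order.2 ⟨fun a ha => Eventually.of_forall fun n =>
    ha.trans_le (Real.iSup_nonneg fun i => abs_nonneg _), fun a ha => ?_⟩
  filter_upwards [h (a / 2) (half_pos ha)] with n hn
  exact (Real.iSup_le hn (half_pos ha).le).trans_lt (half_lt_self ha)

/-- Case III of Theorem 1: every circle diffeomorphism with irrational rotation number
is C¹-distorted. -/
theorem c1_distorted_of_irrational_rotation_number
    (f : ℝ → ℝ) (hf : ContDiff ℝ 1 f)
    (hlift : ∀ x : ℝ, f (x + 1) = f x + 1)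
    (hpos : ∀ x : ℝ, 0 < deriv f x)
    (α : ℝ) (hirr : ∀ p q : ℤ, α ≠ (p : ℝ) / (q : ℝ))
    (hrot : Filter.Tendsto (fun n : ℕ => f^[n] 0 / (n : ℝ)) Filter.atTop (𝓝 α)) :
    Filter.Tendsto
      (fun n : ℕ => ⨆ x : Set.Icc (0:ℝ) 1, |(1 / (n : ℝ)) * Real.log (deriv (f^[n]) x)|)
      Filter.atTop (𝓝 0) := by
  have hdiff : Differentiable ℝ f := hf.differentiable one_ne_zero
  have hα : Irrational α := (irrational_iff_ne_rational α).2 fun p q _ => hirr p q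
  set φ := fun x => Real.log (deriv f x)
  have hφc : Continuous φ := (hf.continuous_deriv le_rfl).log fun x => (hpos x).ne'
  have hφp : Periodic φ 1 := fun x => by simp only [φ, periodic_deriv_of_map_add_one hlift x]
  have hmono : StrictMono f := strictMono_of_deriv_pos hpos
  let f₁ : CircleDeg1Lift := ⟨⟨f, hmono.monotone⟩, hlift⟩
  obtain ⟨F, hF⟩ : ∃ F : CircleDeg1Lift, Semiconj F f (· + α) :=
    f₁.exists_semiconj_add_of_tendsto
      ⟨hmono.injective, f₁.continuous_iff_surjective.1 hdiff.continuous⟩ hrot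
  refine tendsto_iSup_abs_of_eventually_le fun ε hε => ?_
  filter_upwards [hα.eventually_birkhoffSum_sub_le_of_semiconj hF hφc hφp hε,
    eventually_gt_atTop 0] with n hn hn0 x
  obtain ⟨ξ, hξ⟩ := exists_deriv_iterate_eq_one hdiff hlift n
  have hξ0 : birkhoffSum f φ n ξ = 0 := by
    rw [← log_deriv_iterate_eq_birkhoffSum hdiff hpos, hξ, Real.log_one]
  rw [log_deriv_iterate_eq_birkhoffSum hdiff hpos, abs_mul, one_div, abs_inv, Nat.abs_cast,
    inv_mul_le_iff₀ (by exact_mod_cast hn0), abs_le]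
  constructor <;> linarith [hn x ξ, hn ξ x]
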